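/- Every cube with all eight vertices in ℤ³ has side length equal to a positive integer. -/

import Mathlib

/-!
Let `M` be the integer matrix with rows `u₁, u₂, u₃` and `N = ‖u₁‖²`. Then `M Mᵀ = N • 1`, so
`(det M)² = N³`. Since `ℤ` is integrally closed, `N²` dividing `(det M)²` gives `N ∣ det M`, and
writing `det M = N k` yields `N = k²`: the side length is `|k|`.
-/

open Matrix

/-- Casting a vector of integers to a point of `ℝ³` (with the Euclidean structure). -/
noncomputable def intVec (v : Fin 3 → ℤ) : EuclideanSpace ℝ (Fin 3) :=
  (WithLp.equiv 2 (Fin 3 → ℝ)).symm fun i => (v i : ℝ)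

theorem IsIntegrallyClosed.exists_sq_eq_of_sq_eq_pow_odd {R : Type*} [CommRing R] [IsDomain R]
    [IsIntegrallyClosed R] {a b : R} {n : ℕ} (hn : Odd n) (h : a ^ 2 = b ^ n) :
    ∃ k, k ^ 2 = b := by
  obtain ⟨m, rfl⟩ := hn
  rcases eq_or_ne b 0 with rfl | hb
  · exact ⟨0, by simp⟩
  have hsplit : a ^ 2 = (b ^ m) ^ 2 * b := by rw [h]; ring
  obtain ⟨k, rfl⟩ : b ^ m ∣ a :=
    (IsIntegrallyClosed.pow_dvd_pow_iff two_ne_zero).1 ⟨b, hsplit⟩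
  refine ⟨k, mul_left_cancel₀ (pow_ne_zero 2 (pow_ne_zero m hb)) ?_⟩
  rw [← hsplit, mul_pow]

theorem Matrix.det_sq_of_mul_transpose_eq_smul_one {n R : Type*} [Fintype n] [DecidableEq n]
    [CommRing R] {M : Matrix n n R} {c : R} (h : M * Mᵀ = c • 1) :
    M.det ^ 2 = c ^ Fintype.card n := by
  simpa [det_mul, det_transpose, det_smul, sq] using congrArg det h

theorem Matrix.of_mul_transpose_eq_smul_one {n R : Type*} [Fintype n] [DecidableEq n]
    [CommRing R] {u : n → n → R} {c : R} (horth : Pairwise fun i j ↦ u i ⬝ᵥ u j = 0)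
    (hnorm : ∀ i, u i ⬝ᵥ u i = c) : of u * (of u)ᵀ = c • 1 := by
  ext i j
  rw [mul_apply', smul_apply, one_apply]
  rcases eq_or_ne i j with rfl | hij
  · rw [if_pos rfl, smul_eq_mul, mul_one]
    exact hnorm i
  · rw [if_neg hij, smul_zero]
    exact horth hij

theorem IsIntegrallyClosed.exists_sq_eq_of_pairwise_orthogonal {R : Type*} [CommRing R]
    [IsDomain R] [IsIntegrallyClosed R] {n : ℕ} (hn : Odd n) {u : Fin n → Fin n → R} {c : R}
    (horth : Pairwise fun i j ↦ u i ⬝ᵥ u j = 0) (hnorm : ∀ i, u i ⬝ᵥ u i = c) :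
    ∃ k, k ^ 2 = c := by
  have hdet := det_sq_of_mul_transpose_eq_smul_one (of_mul_transpose_eq_smul_one horth hnorm)
  rw [Fintype.card_fin] at hdet
  exact IsIntegrallyClosed.exists_sq_eq_of_sq_eq_pow_odd hn hdet

theorem norm_intVec (u : Fin 3 → ℤ) : ‖intVec u‖ = √((u ⬝ᵥ u : ℤ) : ℝ) := by
  simp [intVec, EuclideanSpace.norm_eq, dotProduct, Fin.sum_univ_three, sq]

theorem cube_side_length_integer_general (u₁ u₂ u₃ : Fin 3 → ℤ)
    (h12 : u₁ ⬝ᵥ u₂ = 0) (h13 : u₁ ⬝ᵥ u₃ = 0) (h23 : u₂ ⬝ᵥ u₃ = 0)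
    (hn1 : u₁ ⬝ᵥ u₁ = u₂ ⬝ᵥ u₂) (hn2 : u₂ ⬝ᵥ u₂ = u₃ ⬝ᵥ u₃)
    (h0 : u₁ ≠ 0) :
    ∃ n : ℕ, 0 < n ∧ ‖intVec u₁‖ = n := by
  obtain ⟨k, hk⟩ : ∃ k, k ^ 2 = u₁ ⬝ᵥ u₁ := by
    refine IsIntegrallyClosed.exists_sq_eq_of_pairwise_orthogonal (u := ![u₁, u₂, u₃])
      (by decide) ?_ ?_
    · intro i j hij
      fin_cases i <;> fin_cases j <;> simp_all [dotProduct_comm]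
    · intro i
      fin_cases i <;> simp [hn1, hn2]
  have hk0 : k ≠ 0 := by
    rintro rfl
    exact h0 (dotProduct_self_eq_zero.1 (by simpa using hk.symm))
  refine ⟨k.natAbs, Int.natAbs_pos.2 hk0, ?_⟩
  rw [norm_intVec, ← hk, Int.cast_pow, Real.sqrt_sq_eq_abs, Nat.cast_natAbs, Int.cast_abs]

/-- Every cube with all eight vertices in `ℤ³` (given by a vertex `v ∈ ℤ³` and three
pairwise orthogonal nonzero integer edge vectors of equal norm) has side length a
positive integer. -/
theorem cube_side_length_integer (v u₁ u₂ u₃ : Fin 3 → ℤ)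
    (h12 : u₁ ⬝ᵥ u₂ = 0) (h13 : u₁ ⬝ᵥ u₃ = 0) (h23 : u₂ ⬝ᵥ u₃ = 0)
    (hn1 : u₁ ⬝ᵥ u₁ = u₂ ⬝ᵥ u₂) (hn2 : u₂ ⬝ᵥ u₂ = u₃ ⬝ᵥ u₃)
    (h0 : u₁ ≠ 0) :
    ∃ n : ℕ, 0 < n ∧ ‖intVec u₁‖ = n :=
  cube_side_length_integer_general u₁ u₂ u₃ h12 h13 h23 hn1 hn2 h0
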